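/- The quantifier-elimination rewrite relation → on formulas is confluent: for all formulas F₀, F₁, F₂ with F₀ →* F₁ and F₀ →* F₂, there exists a formula F₃ with F₁ →* F₃ and F₂ →* F₃. -/

import Mathlib

mutual
  /-- Terms of first-order logic extended with Hilbert's ε-operator,
  in de Bruijn representation (so formulas are automatically identified up
  to renaming of bound variables). -/
  inductive Tm : Type
    | var : ℕ → Tm
    | fn : ℕ → (k : ℕ) → (Fin k → Tm) → Tm
    | eps : Fm → Tm
  /-- Formulas; `ex F`, `all F` and `Tm.eps F` bind de Bruijn index 0 of `F`. -/
  inductive Fm : Type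
    | pred : ℕ → (k : ℕ) → (Fin k → Tm) → Fm
    | not : Fm → Fm
    | or : Fm → Fm → Fm
    | and : Fm → Fm → Fm
    | imp : Fm → Fm → Fm
    | ex : Fm → Fm
    | all : Fm → Fm
end

/-- Lifting a renaming under a binder. -/
def upRen (r : ℕ → ℕ) : ℕ → ℕ
  | 0 => 0
  | n + 1 => r n + 1

mutual
  /-- Renaming of free variables in a term. -/
  def renT (r : ℕ → ℕ) : Tm → Tm
    | .var i => .var (r i)
    | .fn f k a => .fn f k (fun i => renT r (a i))
    | .eps F => .eps (renF (upRen r) F)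
  /-- Renaming of free variables in a formula. -/
  def renF (r : ℕ → ℕ) : Fm → Fm
    | .pred p k a => .pred p k (fun i => renT r (a i))
    | .not F => .not (renF r F)
    | .or F G => .or (renF r F) (renF r G)
    | .and F G => .and (renF r F) (renF r G)
    | .imp F G => .imp (renF r F) (renF r G)
    | .ex F => .ex (renF (upRen r) F)
    | .all F => .all (renF (upRen r) F)
end

/-- Lifting a substitution under a binder. -/
def upSub (σ : ℕ → Tm) : ℕ → Tm
  | 0 => .var 0
  | n + 1 => renT Nat.succ (σ n)

mutual
  /-- Capture-avoiding simultaneous substitution on terms. -/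
  def subT (σ : ℕ → Tm) : Tm → Tm
    | .var i => σ i
    | .fn f k a => .fn f k (fun i => subT σ (a i))
    | .eps F => .eps (subF (upSub σ) F)
  /-- Capture-avoiding simultaneous substitution on formulas. -/
  def subF (σ : ℕ → Tm) : Fm → Fm
    | .pred p k a => .pred p k (fun i => subT σ (a i))
    | .not F => .not (subF σ F)
    | .or F G => .or (subF σ F) (subF σ G)
    | .and F G => .and (subF σ F) (subF σ G)
    | .imp F G => .imp (subF σ F) (subF σ G)
    | .ex F => .ex (subF (upSub σ) F)
    | .all F => .all (subF (upSub σ) F)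
end

/-- `inst1 F t` is `F{x ↦ t}` for the variable `x` bound just outside `F`
(de Bruijn index 0). -/
def inst1 (F : Fm) (t : Tm) : Fm :=
  subF (fun n => match n with | 0 => t | n + 1 => .var n) F

mutual
  /-- The variable with de Bruijn index `n` occurs free in the term. -/
  def freeT (n : ℕ) : Tm → Prop
    | .var i => i = n
    | .fn _ _ a => ∃ i, freeT n (a i)
    | .eps F => freeF (n + 1) F
  /-- The variable with de Bruijn index `n` occurs free in the formula. -/
  def freeF (n : ℕ) : Fm → Prop
    | .pred _ _ a => ∃ i, freeT n (a i)
    | .not F => freeF n F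
    | .or F G => freeF n F ∨ freeF n G
    | .and F G => freeF n F ∨ freeF n G
    | .imp F G => freeF n F ∨ freeF n G
    | .ex F => freeF (n + 1) F
    | .all F => freeF (n + 1) F
end

mutual
  /-- Number of occurrences of quantifiers (∃ and ∀, but not ε) in a term. -/
  def qcT : Tm → ℕ
    | .var _ => 0
    | .fn _ _ a => ∑ i, qcT (a i)
    | .eps F => qcF F
  /-- Number of occurrences of quantifiers (∃ and ∀, but not ε) in a formula. -/
  def qcF : Fm → ℕ
    | .pred _ _ a => ∑ i, qcT (a i)
    | .not F => qcF F
    | .or F G => qcF F + qcF G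
    | .and F G => qcF F + qcF G
    | .imp F G => qcF F + qcF G
    | .ex F => qcF F + 1
    | .all F => qcF F + 1
end

/-- Quantifier symbols. -/
inductive Quant : Type
  | ex
  | all

/-- `mkQ Q A` is the quantified formula `Qx. A`. -/
def mkQ : Quant → Fm → Fm
  | .ex, A => .ex A
  | .all, A => .all A

/-- `negQ Q A` is `¬^Q A`: `¬A` for `Q = ∀` and `A` for `Q = ∃`. -/
def negQ : Quant → Fm → Fm
  | .ex, A => A
  | .all, A => .not A

/-- `qeRedex Q A` is `A{x ↦ εx. ¬^Q A}`, the contractum of the redex `Qx. A`. -/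
def qeRedex (Q : Quant) (A : Fm) : Fm := inst1 A (.eps (negQ Q A))

mutual
  /-- One rewrite step inside a term, where each rewritten quantified subformula
  `Qx. A` is required to satisfy the side condition `P A`. -/
  inductive StepT (P : Fm → Prop) : Tm → Tm → Prop
    | fn {f k} {a : Fin k → Tm} {j : Fin k} {t' : Tm} :
        StepT P (a j) t' → StepT P (.fn f k a) (.fn f k (Function.update a j t'))
    | eps {F F'} : StepF P F F' → StepT P (.eps F) (.eps F')
  /-- One rewrite step on formulas: replace one occurrence of a subformula
  `Qx. A` (with `P A`) by `A{x ↦ εx. ¬^Q A}`. -/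
  inductive StepF (P : Fm → Prop) : Fm → Fm → Prop
    | root {Q A} : P A → StepF P (mkQ Q A) (qeRedex Q A)
    | pred {p k} {a : Fin k → Tm} {j : Fin k} {t' : Tm} :
        StepT P (a j) t' → StepF P (.pred p k a) (.pred p k (Function.update a j t'))
    | not {F F'} : StepF P F F' → StepF P (.not F) (.not F')
    | orL {F F' G} : StepF P F F' → StepF P (.or F G) (.or F' G)
    | orR {F G G'} : StepF P G G' → StepF P (.or F G) (.or F G')
    | andL {F F' G} : StepF P F F' → StepF P (.and F G) (.and F' G)
    | andR {F G G'} : StepF P G G' → StepF P (.and F G) (.and F G')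
    | impL {F F' G} : StepF P F F' → StepF P (.imp F G) (.imp F' G)
    | impR {F G G'} : StepF P G G' → StepF P (.imp F G) (.imp F G')
    | ex {F F'} : StepF P F F' → StepF P (.ex F) (.ex F')
    | all {F F'} : StepF P F F' → StepF P (.all F) (.all F')
end

/-- The quantifier-elimination rewrite relation `→` on formulas. -/
def Step : Fm → Fm → Prop := StepF (fun _ => True)

/-- `→₀`: the steps rewriting a vacuous quantifier (bound variable not free in the body). -/
def Step0 : Fm → Fm → Prop := StepF (fun A => ¬ freeF 0 A)

/-- `→₁`: the steps rewriting a non-vacuous quantifier. -/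
def Step1 : Fm → Fm → Prop := StepF (fun A => freeF 0 A)

/-- `→ℐ`: the innermost steps, whose rewritten subformula `Qx. A` contains no
quantifier other than the outermost `Q`. -/
def StepI : Fm → Fm → Prop := StepF (fun A => qcF A = 0)

/-!
Tait–Martin-Löf's method in Takahashi's form. Parallel reduction `ParF` contracts an arbitrary set
of quantifier redexes at once, and `Step ⊆ ParF ⊆ Step*`, so `Step*` and `ParF*` coincide.
Parallel reduction is stable under substitution, so contracting a redex `Qx. A` commutes with
reducing inside `A`, including inside the copy of `A` that the contractum carries in its ε-term.
This gives the triangle property: every parallel reduct of `F` reduces in parallel to the complete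
development `cdF F`. Hence `ParF` has the diamond property and `ParF*` is confluent.
-/

open Relation

theorem Relation.ReflTransGen.lift₂ {α β : Type*} {r : α → α → Prop} {p : β → β → Prop}
    (c : α → α → β) (hl : ∀ x x' y, r x x' → p (c x y) (c x' y))
    (hr : ∀ x y y', r y y' → p (c x y) (c x y')) {x x' y y' : α}
    (hx : ReflTransGen r x x') (hy : ReflTransGen r y y') :
    ReflTransGen p (c x y) (c x' y') :=
  (hx.lift (c · y) fun _ _ h => hl _ _ _ h).trans (hy.lift (c x' ·) fun _ _ h => hr _ _ _ h)

theorem Relation.ReflTransGen.lift_pi {ι α β : Type*} [Fintype ι] [DecidableEq ι]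
    {r : α → α → Prop} {p : β → β → Prop} (c : (ι → α) → β)
    (hc : ∀ f j y, r (f j) y → p (c f) (c (Function.update f j y)))
    {a b : ι → α} (h : ∀ i, ReflTransGen r (a i) (b i)) : ReflTransGen p (c a) (c b) := by
  suffices ∀ s : Finset ι, ReflTransGen p (c a) (c (s.piecewise b a)) by
    simpa using this Finset.univ
  intro s
  induction s using Finset.induction_on with
  | empty => simpa using ReflTransGen.refl
  | insert j s hj ih =>
    rw [Finset.piecewise_insert]
    set g := s.piecewise b a
    have hgj : g j = a j := Finset.piecewise_eq_of_notMem _ _ _ hj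
    have hstep : ReflTransGen p (c (Function.update g j (a j))) (c (Function.update g j (b j))) :=
      (h j).lift (fun x => c (Function.update g j x)) fun x y hxy => by
        simpa using hc (Function.update g j x) j y (by simpa using hxy)
    rw [← hgj, Function.update_eq_self] at hstep
    exact ih.trans hstep

theorem upRen_upRen {r s u : ℕ → ℕ} (h : ∀ n, r (s n) = u n) :
    ∀ n, upRen r (upRen s n) = upRen u n
  | 0 => rfl
  | n + 1 => congrArg Nat.succ (h n)

mutual
theorem renT_renT {r s u : ℕ → ℕ} (h : ∀ n, r (s n) = u n) :
    ∀ t, renT r (renT s t) = renT u t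
  | .var i => congrArg Tm.var (h i)
  | .fn f k a => congrArg (Tm.fn f k) (funext fun i => renT_renT h (a i))
  | .eps F => congrArg Tm.eps (renF_renF (upRen_upRen h) F)
theorem renF_renF {r s u : ℕ → ℕ} (h : ∀ n, r (s n) = u n) :
    ∀ F, renF r (renF s F) = renF u F
  | .pred p k a => congrArg (Fm.pred p k) (funext fun i => renT_renT h (a i))
  | .not F => congrArg Fm.not (renF_renF h F)
  | .or F G => congrArg₂ Fm.or (renF_renF h F) (renF_renF h G)
  | .and F G => congrArg₂ Fm.and (renF_renF h F) (renF_renF h G)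
  | .imp F G => congrArg₂ Fm.imp (renF_renF h F) (renF_renF h G)
  | .ex F => congrArg Fm.ex (renF_renF (upRen_upRen h) F)
  | .all F => congrArg Fm.all (renF_renF (upRen_upRen h) F)
end

theorem upSub_upRen {σ : ℕ → Tm} {r : ℕ → ℕ} {τ : ℕ → Tm} (h : ∀ n, σ (r n) = τ n) :
    ∀ n, upSub σ (upRen r n) = upSub τ n
  | 0 => rfl
  | n + 1 => congrArg (renT Nat.succ) (h n)

mutual
theorem subT_renT {σ : ℕ → Tm} {r : ℕ → ℕ} {τ : ℕ → Tm} (h : ∀ n, σ (r n) = τ n) :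
    ∀ t, subT σ (renT r t) = subT τ t
  | .var i => h i
  | .fn f k a => congrArg (Tm.fn f k) (funext fun i => subT_renT h (a i))
  | .eps F => congrArg Tm.eps (subF_renF (upSub_upRen h) F)
theorem subF_renF {σ : ℕ → Tm} {r : ℕ → ℕ} {τ : ℕ → Tm} (h : ∀ n, σ (r n) = τ n) :
    ∀ F, subF σ (renF r F) = subF τ F
  | .pred p k a => congrArg (Fm.pred p k) (funext fun i => subT_renT h (a i))
  | .not F => congrArg Fm.not (subF_renF h F)
  | .or F G => congrArg₂ Fm.or (subF_renF h F) (subF_renF h G)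
  | .and F G => congrArg₂ Fm.and (subF_renF h F) (subF_renF h G)
  | .imp F G => congrArg₂ Fm.imp (subF_renF h F) (subF_renF h G)
  | .ex F => congrArg Fm.ex (subF_renF (upSub_upRen h) F)
  | .all F => congrArg Fm.all (subF_renF (upSub_upRen h) F)
end

theorem upRen_upSub {r : ℕ → ℕ} {σ τ : ℕ → Tm} (h : ∀ n, renT r (σ n) = τ n) :
    ∀ n, renT (upRen r) (upSub σ n) = upSub τ n
  | 0 => rfl
  | n + 1 => by
    rw [upSub, upSub, ← h n, renT_renT (r := upRen r) (s := Nat.succ) (u := Nat.succ ∘ r)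
      (fun _ => rfl), renT_renT (r := Nat.succ) (s := r) (u := Nat.succ ∘ r) (fun _ => rfl)]

mutual
theorem renT_subT {r : ℕ → ℕ} {σ τ : ℕ → Tm} (h : ∀ n, renT r (σ n) = τ n) :
    ∀ t, renT r (subT σ t) = subT τ t
  | .var i => h i
  | .fn f k a => congrArg (Tm.fn f k) (funext fun i => renT_subT h (a i))
  | .eps F => congrArg Tm.eps (renF_subF (upRen_upSub h) F)
theorem renF_subF {r : ℕ → ℕ} {σ τ : ℕ → Tm} (h : ∀ n, renT r (σ n) = τ n) :
    ∀ F, renF r (subF σ F) = subF τ F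
  | .pred p k a => congrArg (Fm.pred p k) (funext fun i => renT_subT h (a i))
  | .not F => congrArg Fm.not (renF_subF h F)
  | .or F G => congrArg₂ Fm.or (renF_subF h F) (renF_subF h G)
  | .and F G => congrArg₂ Fm.and (renF_subF h F) (renF_subF h G)
  | .imp F G => congrArg₂ Fm.imp (renF_subF h F) (renF_subF h G)
  | .ex F => congrArg Fm.ex (renF_subF (upRen_upSub h) F)
  | .all F => congrArg Fm.all (renF_subF (upRen_upSub h) F)
end

theorem upSub_upSub {σ τ ρ : ℕ → Tm} (h : ∀ n, subT τ (σ n) = ρ n) :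
    ∀ n, subT (upSub τ) (upSub σ n) = upSub ρ n
  | 0 => rfl
  | n + 1 => by
    rw [upSub, upSub, subT_renT (fun _ => rfl), ← h n, renT_subT (fun _ => rfl)]
    rfl

mutual
theorem subT_subT {σ τ ρ : ℕ → Tm} (h : ∀ n, subT τ (σ n) = ρ n) :
    ∀ t, subT τ (subT σ t) = subT ρ t
  | .var i => h i
  | .fn f k a => congrArg (Tm.fn f k) (funext fun i => subT_subT h (a i))
  | .eps F => congrArg Tm.eps (subF_subF (upSub_upSub h) F)
theorem subF_subF {σ τ ρ : ℕ → Tm} (h : ∀ n, subT τ (σ n) = ρ n) :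
    ∀ F, subF τ (subF σ F) = subF ρ F
  | .pred p k a => congrArg (Fm.pred p k) (funext fun i => subT_subT h (a i))
  | .not F => congrArg Fm.not (subF_subF h F)
  | .or F G => congrArg₂ Fm.or (subF_subF h F) (subF_subF h G)
  | .and F G => congrArg₂ Fm.and (subF_subF h F) (subF_subF h G)
  | .imp F G => congrArg₂ Fm.imp (subF_subF h F) (subF_subF h G)
  | .ex F => congrArg Fm.ex (subF_subF (upSub_upSub h) F)
  | .all F => congrArg Fm.all (subF_subF (upSub_upSub h) F)
end

theorem upSub_var : upSub Tm.var = Tm.var :=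
  funext fun | 0 => rfl | _ + 1 => rfl

mutual
theorem subT_var : ∀ t, subT Tm.var t = t
  | .var _ => rfl
  | .fn f k a => congrArg (Tm.fn f k) (funext fun i => subT_var (a i))
  | .eps F => congrArg Tm.eps (by rw [upSub_var]; exact subF_var F)
theorem subF_var : ∀ F, subF Tm.var F = F
  | .pred p k a => congrArg (Fm.pred p k) (funext fun i => subT_var (a i))
  | .not F => congrArg Fm.not (subF_var F)
  | .or F G => congrArg₂ Fm.or (subF_var F) (subF_var G)
  | .and F G => congrArg₂ Fm.and (subF_var F) (subF_var G)
  | .imp F G => congrArg₂ Fm.imp (subF_var F) (subF_var G)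
  | .ex F => congrArg Fm.ex (by rw [upSub_var]; exact subF_var F)
  | .all F => congrArg Fm.all (by rw [upSub_var]; exact subF_var F)
end

theorem renF_inst1 (r : ℕ → ℕ) (A : Fm) (t : Tm) :
    renF r (inst1 A t) = inst1 (renF (upRen r) A) (renT r t) := by
  let ρ : ℕ → Tm := fun | 0 => renT r t | n + 1 => .var (r n)
  unfold inst1
  rw [renF_subF (τ := ρ) (by rintro (_ | _) <;> rfl),
    subF_renF (τ := ρ) (by rintro (_ | _) <;> rfl)]

theorem subF_inst1 (σ : ℕ → Tm) (A : Fm) (t : Tm) :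
    subF σ (inst1 A t) = inst1 (subF (upSub σ) A) (subT σ t) := by
  let ρ : ℕ → Tm := fun | 0 => subT σ t | n + 1 => σ n
  unfold inst1
  rw [subF_subF (ρ := ρ) (by rintro (_ | _) <;> rfl), subF_subF (ρ := ρ)]
  rintro (_ | n)
  · rfl
  · exact (subT_renT (fun _ => rfl) (σ n)).trans (subT_var (σ n))

theorem renF_mkQ (r : ℕ → ℕ) (Q : Quant) (A : Fm) :
    renF r (mkQ Q A) = mkQ Q (renF (upRen r) A) := by
  cases Q <;> rfl

theorem subF_mkQ (σ : ℕ → Tm) (Q : Quant) (A : Fm) :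
    subF σ (mkQ Q A) = mkQ Q (subF (upSub σ) A) := by
  cases Q <;> rfl

theorem renF_qeRedex (r : ℕ → ℕ) (Q : Quant) (A : Fm) :
    renF r (qeRedex Q A) = qeRedex Q (renF (upRen r) A) := by
  rw [qeRedex, renF_inst1]
  cases Q <;> rfl

theorem subF_qeRedex (σ : ℕ → Tm) (Q : Quant) (A : Fm) :
    subF σ (qeRedex Q A) = qeRedex Q (subF (upSub σ) A) := by
  rw [qeRedex, subF_inst1]
  cases Q <;> rfl

mutual
inductive ParT : Tm → Tm → Prop
  | var (n : ℕ) : ParT (.var n) (.var n)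
  | fn {f k} {a a' : Fin k → Tm} : (∀ i, ParT (a i) (a' i)) → ParT (.fn f k a) (.fn f k a')
  | eps {F F'} : ParF F F' → ParT (.eps F) (.eps F')
/-- Parallel reduction: contract any set of redexes at once. In `root`, the body `A` is reduced
before contraction, and the same `A'` is used for both copies of the body in the contractum. -/
inductive ParF : Fm → Fm → Prop
  | pred {p k} {a a' : Fin k → Tm} :
      (∀ i, ParT (a i) (a' i)) → ParF (.pred p k a) (.pred p k a')
  | not {F F'} : ParF F F' → ParF (.not F) (.not F')
  | or {F F' G G'} : ParF F F' → ParF G G' → ParF (.or F G) (.or F' G')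
  | and {F F' G G'} : ParF F F' → ParF G G' → ParF (.and F G) (.and F' G')
  | imp {F F' G G'} : ParF F F' → ParF G G' → ParF (.imp F G) (.imp F' G')
  | ex {F F'} : ParF F F' → ParF (.ex F) (.ex F')
  | all {F F'} : ParF F F' → ParF (.all F) (.all F')
  | root {Q A A'} : ParF A A' → ParF (mkQ Q A) (qeRedex Q A')
end

mutual
theorem parT_refl : ∀ t, ParT t t
  | .var i => .var i
  | .fn _ _ a => .fn fun i => parT_refl (a i)
  | .eps F => .eps (parF_refl F)
theorem parF_refl : ∀ F, ParF F F
  | .pred _ _ a => .pred fun i => parT_refl (a i)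
  | .not F => .not (parF_refl F)
  | .or F G => .or (parF_refl F) (parF_refl G)
  | .and F G => .and (parF_refl F) (parF_refl G)
  | .imp F G => .imp (parF_refl F) (parF_refl G)
  | .ex F => .ex (parF_refl F)
  | .all F => .all (parF_refl F)
end

mutual
theorem parT_renT {r : ℕ → ℕ} {t t' : Tm} : ParT t t' → ParT (renT r t) (renT r t')
  | .var n => .var (r n)
  | .fn h => .fn fun i => parT_renT (h i)
  | .eps h => .eps (parF_renF h)
theorem parF_renF {r : ℕ → ℕ} {F F' : Fm} : ParF F F' → ParF (renF r F) (renF r F')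
  | .pred h => .pred fun i => parT_renT (h i)
  | .not h => .not (parF_renF h)
  | .or h g => .or (parF_renF h) (parF_renF g)
  | .and h g => .and (parF_renF h) (parF_renF g)
  | .imp h g => .imp (parF_renF h) (parF_renF g)
  | .ex h => .ex (parF_renF h)
  | .all h => .all (parF_renF h)
  | .root h => by
    rw [renF_mkQ, renF_qeRedex]
    exact .root (parF_renF h)
end

theorem parT_upSub {σ τ : ℕ → Tm} (hs : ∀ n, ParT (σ n) (τ n)) :
    ∀ n, ParT (upSub σ n) (upSub τ n)
  | 0 => .var 0
  | n + 1 => parT_renT (hs n)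

mutual
theorem parT_subT {σ τ : ℕ → Tm} (hs : ∀ n, ParT (σ n) (τ n)) {t t' : Tm} :
    ParT t t' → ParT (subT σ t) (subT τ t')
  | .var n => hs n
  | .fn h => .fn fun i => parT_subT hs (h i)
  | .eps h => .eps (parF_subF (parT_upSub hs) h)
theorem parF_subF {σ τ : ℕ → Tm} (hs : ∀ n, ParT (σ n) (τ n)) {F F' : Fm} :
    ParF F F' → ParF (subF σ F) (subF τ F')
  | .pred h => .pred fun i => parT_subT hs (h i)
  | .not h => .not (parF_subF hs h)
  | .or h g => .or (parF_subF hs h) (parF_subF hs g)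
  | .and h g => .and (parF_subF hs h) (parF_subF hs g)
  | .imp h g => .imp (parF_subF hs h) (parF_subF hs g)
  | .ex h => .ex (parF_subF (parT_upSub hs) h)
  | .all h => .all (parF_subF (parT_upSub hs) h)
  | .root h => by
    rw [subF_mkQ, subF_qeRedex]
    exact .root (parF_subF (parT_upSub hs) h)
end

theorem parF_negQ {Q : Quant} {A A' : Fm} (h : ParF A A') : ParF (negQ Q A) (negQ Q A') := by
  cases Q
  exacts [h, .not h]

theorem parF_qeRedex {Q : Quant} {A A' : Fm} (h : ParF A A') :
    ParF (qeRedex Q A) (qeRedex Q A') :=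
  parF_subF (by rintro (_ | n) <;> [exact .eps (parF_negQ h); exact .var n]) h

mutual
def cdT : Tm → Tm
  | .var n => .var n
  | .fn f k a => .fn f k fun i => cdT (a i)
  | .eps F => .eps (cdF F)
/-- The complete development: contract every quantifier redex, innermost first. -/
def cdF : Fm → Fm
  | .pred p k a => .pred p k fun i => cdT (a i)
  | .not F => .not (cdF F)
  | .or F G => .or (cdF F) (cdF G)
  | .and F G => .and (cdF F) (cdF G)
  | .imp F G => .imp (cdF F) (cdF G)
  | .ex F => qeRedex .ex (cdF F)
  | .all F => qeRedex .all (cdF F)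
end

theorem cdF_mkQ (Q : Quant) (A : Fm) : cdF (mkQ Q A) = qeRedex Q (cdF A) := by
  cases Q <;> rfl

mutual
theorem parT_cdT {t u : Tm} : ParT t u → ParT u (cdT t)
  | .var n => .var n
  | .fn h => .fn fun i => parT_cdT (h i)
  | .eps h => .eps (parF_cdF h)
theorem parF_cdF {F G : Fm} : ParF F G → ParF G (cdF F)
  | .pred h => .pred fun i => parT_cdT (h i)
  | .not h => .not (parF_cdF h)
  | .or h g => .or (parF_cdF h) (parF_cdF g)
  | .and h g => .and (parF_cdF h) (parF_cdF g)
  | .imp h g => .imp (parF_cdF h) (parF_cdF g)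
  | .ex h => .root (Q := .ex) (parF_cdF h)
  | .all h => .root (Q := .all) (parF_cdF h)
  | .root h => by
    rw [cdF_mkQ]
    exact parF_qeRedex (parF_cdF h)
end

mutual
theorem parT_of_stepT {P : Fm → Prop} {t t' : Tm} : StepT P t t' → ParT t t'
  | .fn (a := a) (j := j) h => .fn fun i => by
    rcases eq_or_ne i j with rfl | hij
    · simpa using parT_of_stepT h
    · simpa [hij] using parT_refl (a i)
  | .eps h => .eps (parF_of_stepF h)
theorem parF_of_stepF {P : Fm → Prop} {F F' : Fm} : StepF P F F' → ParF F F'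
  | .root _ => .root (parF_refl _)
  | .pred (a := a) (j := j) h => .pred fun i => by
    rcases eq_or_ne i j with rfl | hij
    · simpa using parT_of_stepT h
    · simpa [hij] using parT_refl (a i)
  | .not h => .not (parF_of_stepF h)
  | .orL h => .or (parF_of_stepF h) (parF_refl _)
  | .orR h => .or (parF_refl _) (parF_of_stepF h)
  | .andL h => .and (parF_of_stepF h) (parF_refl _)
  | .andR h => .and (parF_refl _) (parF_of_stepF h)
  | .impL h => .imp (parF_of_stepF h) (parF_refl _)
  | .impR h => .imp (parF_refl _) (parF_of_stepF h)
  | .ex h => .ex (parF_of_stepF h)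
  | .all h => .all (parF_of_stepF h)
end

theorem StepF.mkQ {P : Fm → Prop} {Q : Quant} {A A' : Fm} (h : StepF P A A') :
    StepF P (mkQ Q A) (mkQ Q A') := by
  cases Q
  exacts [.ex h, .all h]

mutual
theorem reflTransGen_of_parT {t t' : Tm} : ParT t t' → ReflTransGen (StepT fun _ => True) t t'
  | .var _ => .refl
  | .fn h => ReflTransGen.lift_pi (Tm.fn _ _) (fun _ _ _ => StepT.fn)
      fun i => reflTransGen_of_parT (h i)
  | .eps h => (reflTransGen_of_parF h).lift Tm.eps fun _ _ => StepT.eps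
theorem reflTransGen_of_parF {F F' : Fm} : ParF F F' → ReflTransGen Step F F'
  | .pred h => ReflTransGen.lift_pi (Fm.pred _ _) (fun _ _ _ => StepF.pred)
      fun i => reflTransGen_of_parT (h i)
  | .not h => (reflTransGen_of_parF h).lift Fm.not fun _ _ => StepF.not
  | .or h g => ReflTransGen.lift₂ Fm.or (fun _ _ _ => StepF.orL) (fun _ _ _ => StepF.orR)
      (reflTransGen_of_parF h) (reflTransGen_of_parF g)
  | .and h g => ReflTransGen.lift₂ Fm.and (fun _ _ _ => StepF.andL) (fun _ _ _ => StepF.andR)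
      (reflTransGen_of_parF h) (reflTransGen_of_parF g)
  | .imp h g => ReflTransGen.lift₂ Fm.imp (fun _ _ _ => StepF.impL) (fun _ _ _ => StepF.impR)
      (reflTransGen_of_parF h) (reflTransGen_of_parF g)
  | .ex h => (reflTransGen_of_parF h).lift Fm.ex fun _ _ => StepF.ex
  | .all h => (reflTransGen_of_parF h).lift Fm.all fun _ _ => StepF.all
  | .root h => ((reflTransGen_of_parF h).lift (mkQ _) fun _ _ => StepF.mkQ).tail (.root trivial)
end

/-- the quantifier-elimination rewrite relation `→` is
confluent. -/
theorem stmt13 : ∀ F₀ F₁ F₂ : Fm,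
    Relation.ReflTransGen Step F₀ F₁ → Relation.ReflTransGen Step F₀ F₂ →
    ∃ F₃ : Fm, Relation.ReflTransGen Step F₁ F₃ ∧ Relation.ReflTransGen Step F₂ F₃ := by
  intro F₀ F₁ F₂ h₁ h₂
  have toPar {F G : Fm} (h : ReflTransGen Step F G) : ReflTransGen ParF F G :=
    ReflTransGen.mono (fun _ _ => parF_of_stepF) _ _ h
  have ofPar {F G : Fm} (h : ReflTransGen ParF F G) : ReflTransGen Step F G :=
    ReflTransGen.lift' id (fun _ _ => reflTransGen_of_parF) _ _ h
  obtain ⟨F₃, h₁₃, h₂₃⟩ := church_rosser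
    (fun F _ _ hG hH => ⟨cdF F, .single (parF_cdF hG), .single (parF_cdF hH)⟩)
    (toPar h₁) (toPar h₂)
  exact ⟨F₃, ofPar h₁₃, ofPar h₂₃⟩
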